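/- Let p ≥ 2 be an integer and let (τ,δ) ∈ 𝒯 with τ ≥ g_{p/2}(δ) = 2√δ cos(2π/p). Then T_p is a real number and T_p > 0. -/

import Mathlib

/-!
The `S_j` satisfy the real recurrence `S_{j+2} = τ S_{j+1} - δ S_j`, so `T_p` is real. Put
`r = √δ < 1`. If `τ ≥ 2r`, induction gives `S_{j+1} ≥ r S_j` and all `S_j` (`j ≥ 1`) are positive.
Otherwise `τ = 2r cos θ` with `0 < θ ≤ 2π/p`, and `S_{j+1} sin θ = r^j sin((j+1)θ)`. Abel summation
writes `∑_{j<p-1} r^j sin((j+1)θ)` as a combination, with nonnegative weights `(1-r) r^k` and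
`r^(p-1)`, of the partial sums `∑_{i≤k} sin((i+1)θ) = sin(kθ/2) sin((k+1)θ/2) / sin(θ/2)`; these are
nonnegative since `(k+1)θ ≤ pθ ≤ 2π`, and the first one, `sin θ`, is positive.
-/

/-- λ₁ = (τ + √(τ²−4δ))/2, using the complex principal square root. -/
noncomputable def lam1 (τ δ : ℝ) : ℂ :=
  ((τ : ℂ) + ((τ : ℂ) ^ 2 - 4 * (δ : ℂ)) ^ ((1 : ℂ) / 2)) / 2

/-- λ₂ = (τ − √(τ²−4δ))/2, using the complex principal square root. -/
noncomputable def lam2 (τ δ : ℝ) : ℂ :=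
  ((τ : ℂ) - ((τ : ℂ) ^ 2 - 4 * (δ : ℂ)) ^ ((1 : ℂ) / 2)) / 2

/-- S_j = Σ_{k=1}^{j} λ₁^{j−k} λ₂^{k−1} (index shifted: k = k'+1). -/
noncomputable def Sseq (τ δ : ℝ) (j : ℕ) : ℂ :=
  ∑ k ∈ Finset.range j, lam1 τ δ ^ (j - 1 - k) * lam2 τ δ ^ k

/-- T_j = Σ_{i=1}^{j−1} S_i. -/
noncomputable def Tseq (τ δ : ℝ) (j : ℕ) : ℂ :=
  ∑ i ∈ Finset.Icc 1 (j - 1), Sseq τ δ i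

open Finset Real

lemma lam1_add_lam2 (τ δ : ℝ) : lam1 τ δ + lam2 τ δ = τ := by
  rw [lam1, lam2]; ring

lemma lam1_mul_lam2 (τ δ : ℝ) : lam1 τ δ * lam2 τ δ = δ := by
  have hsq : (((τ : ℂ) ^ 2 - 4 * δ) ^ ((1 : ℂ) / 2)) ^ 2 = (τ : ℂ) ^ 2 - 4 * δ := by
    rw [one_div]; exact_mod_cast Complex.cpow_nat_inv_pow _ two_ne_zero
  rw [lam1, lam2]; linear_combination (-1 / 4 : ℂ) * hsq

lemma Sseq_succ (τ δ : ℝ) (n : ℕ) :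
    Sseq τ δ (n + 1) = lam2 τ δ ^ n + lam1 τ δ * Sseq τ δ n := by
  simp only [Sseq, Nat.add_sub_cancel, mul_comm (lam1 τ δ ^ _)]
  exact geom_sum₂_succ_eq _ _

lemma Sseq_add_two (τ δ : ℝ) (n : ℕ) :
    Sseq τ δ (n + 2) = τ * Sseq τ δ (n + 1) - δ * Sseq τ δ n := by
  rw [← lam1_add_lam2, ← lam1_mul_lam2, Sseq_succ τ δ (n + 1), Sseq_succ τ δ n]
  ring

lemma Sseq_im (τ δ : ℝ) (n : ℕ) : (Sseq τ δ n).im = 0 := by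
  induction n using Nat.twoStepInduction with
  | zero => simp [Sseq]
  | one => simp [Sseq]
  | more n ih₁ ih₂ =>
    rw [Sseq_add_two, Complex.sub_im, Complex.im_ofReal_mul, Complex.im_ofReal_mul, ih₁, ih₂]
    ring

lemma Sseq_re_add_two (τ δ : ℝ) (n : ℕ) :
    (Sseq τ δ (n + 2)).re = τ * (Sseq τ δ (n + 1)).re - δ * (Sseq τ δ n).re := by
  rw [Sseq_add_two, Complex.sub_re, Complex.re_ofReal_mul, Complex.re_ofReal_mul]

lemma ofReal_re_Sseq (τ δ : ℝ) (n : ℕ) : ((Sseq τ δ n).re : ℂ) = Sseq τ δ n :=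
  Complex.ext (by simp) (by simp [Sseq_im])

lemma Tseq_eq_sum_range (τ δ : ℝ) (p : ℕ) :
    Tseq τ δ p = ((∑ j ∈ range (p - 1), (Sseq τ δ (j + 1)).re : ℝ) : ℂ) := by
  rw [Tseq, ← Ico_add_one_right_eq_Icc, sum_Ico_eq_sum_range, Complex.ofReal_sum]
  simp only [ofReal_re_Sseq, Nat.add_sub_cancel, add_comm 1]

lemma sin_half_mul_sum_range_sin (θ : ℝ) (k : ℕ) :
    sin (θ / 2) * ∑ j ∈ range k, sin ((j + 1) * θ) = sin (k * θ / 2) * sin ((k + 1) * θ / 2) := by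
  induction k with
  | zero => simp
  | succ k ih =>
    rw [sum_range_succ, mul_add, ih]
    set x := θ / 2
    set y := (k + 1) * θ / 2
    have e₁ : (k : ℝ) * θ / 2 = y - x := by ring
    have e₂ : ((k : ℝ) + 1) * θ = 2 * y := by ring
    have e₃ : ((k + 1 : ℕ) + 1 : ℝ) * θ / 2 = y + x := by push_cast; ring
    have e₄ : ((k + 1 : ℕ) : ℝ) * θ / 2 = y := by push_cast; ring
    rw [e₁, e₂, e₃, e₄, sin_sub, sin_add, sin_two_mul]
    ring

lemma sum_range_sin_nonneg {θ : ℝ} (hθ : 0 < θ) {k : ℕ} (hk : (k + 1) * θ ≤ 2 * π) :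
    0 ≤ ∑ j ∈ range k, sin ((j + 1) * θ) := by
  rcases Nat.eq_zero_or_pos k with rfl | hk₁
  · simp
  have hk₁' : (1 : ℝ) ≤ k := by exact_mod_cast hk₁
  have hsin : 0 < sin (θ / 2) := sin_pos_of_pos_of_lt_pi (by positivity) (by nlinarith [pi_pos])
  refine nonneg_of_mul_nonneg_right ?_ hsin
  rw [sin_half_mul_sum_range_sin]
  exact mul_nonneg (sin_nonneg_of_nonneg_of_le_pi (by positivity) (by nlinarith))
    (sin_nonneg_of_nonneg_of_le_pi (by positivity) (by linarith))

-- Abel summation against the geometric weights `r ^ j`.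
lemma sum_range_pow_mul_eq {R : Type*} [CommRing R] (r : R) (a : ℕ → R) (m : ℕ) :
    ∑ j ∈ range m, r ^ j * a j =
      (1 - r) * ∑ k ∈ range m, r ^ k * ∑ i ∈ range (k + 1), a i + r ^ m * ∑ i ∈ range m, a i := by
  induction m with
  | zero => simp
  | succ m ih =>
    rw [sum_range_succ, ih, sum_range_succ, sum_range_succ a m]
    ring

lemma sum_range_pow_mul_pos {r : ℝ} (hr₀ : 0 ≤ r) (hr₁ : r < 1) {a : ℕ → ℝ} {m : ℕ} (hm : 1 ≤ m)
    (ha : 0 < a 0) (hA : ∀ k ≤ m, 0 ≤ ∑ i ∈ range k, a i) : 0 < ∑ j ∈ range m, r ^ j * a j := by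
  have hpos : 0 < ∑ k ∈ range m, r ^ k * ∑ i ∈ range (k + 1), a i :=
    sum_pos' (fun k hk => mul_nonneg (pow_nonneg hr₀ k) (hA (k + 1) (by simp at hk; omega)))
      ⟨0, by simp; omega, by simpa using ha⟩
  rw [sum_range_pow_mul_eq]
  exact add_pos_of_pos_of_nonneg (mul_pos (sub_pos.2 hr₁) hpos)
    (mul_nonneg (pow_nonneg hr₀ m) (hA m le_rfl))

lemma exists_mem_Ioc_cos_eq {α c : ℝ} (hα₀ : 0 ≤ α) (hαπ : α ≤ π) (hα : cos α ≤ c) (hc : c < 1) :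
    ∃ θ ∈ Set.Ioc 0 α, cos θ = c := by
  refine ⟨arccos c, ⟨arccos_pos.2 hc, ?_⟩, cos_arccos (by linarith [neg_one_le_cos α]) hc.le⟩
  calc arccos c ≤ arccos (cos α) := antitone_arccos hα
    _ = α := arccos_cos hα₀ hαπ

section Recurrence

variable {s : ℕ → ℝ} {τ r : ℝ}

lemma pos_succ_of_two_mul_le (hr : 0 < r) (hτ : 2 * r ≤ τ) (h₀ : s 0 = 0) (h₁ : s 1 = 1)
    (hrec : ∀ n, s (n + 2) = τ * s (n + 1) - r ^ 2 * s n) (n : ℕ) : 0 < s (n + 1) := by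
  have key : ∀ n, r * s n ≤ s (n + 1) ∧ 0 < s (n + 1) := by
    intro n
    induction n with
    | zero => simp [h₀, h₁]
    | succ n ih =>
      have hstep : r * s (n + 1) ≤ s (n + 2) := by
        rw [hrec]
        nlinarith [mul_nonneg (sub_nonneg.2 hτ) ih.2.le, mul_nonneg hr.le (sub_nonneg.2 ih.1)]
      exact ⟨hstep, lt_of_lt_of_le (mul_pos hr ih.2) hstep⟩
  exact (key n).2

lemma mul_sin_eq_pow_mul_sin (θ : ℝ) (h₀ : s 0 = 0) (h₁ : s 1 = 1)
    (hrec : ∀ n, s (n + 2) = 2 * r * cos θ * s (n + 1) - r ^ 2 * s n) (n : ℕ) :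
    s (n + 1) * sin θ = r ^ n * sin ((n + 1) * θ) := by
  induction n using Nat.twoStepInduction with
  | zero => simp [h₁]
  | one =>
    rw [hrec, h₀, h₁]
    norm_num [sin_two_mul]
    ring
  | more n ih₁ ih₂ =>
    have hsin : sin ((n + 3) * θ) = 2 * cos θ * sin ((n + 2) * θ) - sin ((n + 1) * θ) := by
      have e₁ : ((n : ℝ) + 3) * θ = (n + 2) * θ + θ := by ring
      have e₂ : ((n : ℝ) + 1) * θ = (n + 2) * θ - θ := by ring
      rw [e₁, e₂, sin_add, sin_sub]; ring
    rw [hrec]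
    push_cast at ih₂ ⊢
    rw [show (n : ℝ) + 2 + 1 = n + 3 by ring, hsin]
    rw [show (n : ℝ) + 1 + 1 = n + 2 by ring] at ih₂
    linear_combination (2 * r * cos θ) * ih₂ - r ^ 2 * ih₁

lemma sum_range_succ_pos_of_eq_two_mul_cos {θ : ℝ} (hr₀ : 0 ≤ r) (hr₁ : r < 1) (hθ₀ : 0 < θ)
    (hθπ : θ < π) {p : ℕ} (hp : 2 ≤ p) (hθp : p * θ ≤ 2 * π) (h₀ : s 0 = 0) (h₁ : s 1 = 1)
    (hrec : ∀ n, s (n + 2) = 2 * r * cos θ * s (n + 1) - r ^ 2 * s n) :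
    0 < ∑ j ∈ range (p - 1), s (j + 1) := by
  have hsin : 0 < sin θ := sin_pos_of_pos_of_lt_pi hθ₀ hθπ
  refine pos_of_mul_pos_left ?_ hsin.le
  rw [sum_mul]
  simp_rw [mul_sin_eq_pow_mul_sin θ h₀ h₁ hrec]
  refine sum_range_pow_mul_pos hr₀ hr₁ (by omega) (by simpa using hsin) fun k hk =>
    sum_range_sin_nonneg hθ₀ ?_
  have hkp : (k : ℝ) + 1 ≤ p := by exact_mod_cast (by omega : k + 1 ≤ p)
  nlinarith

lemma sum_range_succ_pos_of_two_mul_cos_le (hr₀ : 0 < r) (hr₁ : r < 1) {p : ℕ} (hp : 2 ≤ p)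
    (hτ : 2 * r * cos (2 * π / p) ≤ τ) (h₀ : s 0 = 0) (h₁ : s 1 = 1)
    (hrec : ∀ n, s (n + 2) = τ * s (n + 1) - r ^ 2 * s n) :
    0 < ∑ j ∈ range (p - 1), s (j + 1) := by
  rcases le_or_gt (2 * r) τ with hτr | hτr
  · exact sum_pos (fun j _ => pos_succ_of_two_mul_le hr₀ hτr h₀ h₁ hrec j)
      (nonempty_range_iff.2 (by omega))
  -- For `p = 2` the angle below may be `π`, where `sin` vanishes; but then the sum is `s 1`.
  rcases hp.eq_or_lt with rfl | hp₃
  · simp [h₁]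
  have hp₃' : (3 : ℝ) ≤ p := by exact_mod_cast hp₃
  have hα : 2 * π / p < π := by
    rw [div_lt_iff₀ (by positivity)]; nlinarith [pi_pos]
  obtain ⟨θ, ⟨hθ₀, hθα⟩, hcos⟩ := exists_mem_Ioc_cos_eq (c := τ / (2 * r)) (by positivity) hα.le
    (by rw [le_div_iff₀ (by positivity)]; linarith) (by rw [div_lt_one (by positivity)]; exact hτr)
  have hτθ : τ = 2 * r * cos θ := by rw [hcos]; field_simp
  refine sum_range_succ_pos_of_eq_two_mul_cos hr₀.le hr₁ hθ₀ (hθα.trans_lt hα) hp ?_ h₀ h₁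
    (hτθ ▸ hrec)
  rwa [le_div_iff₀ (by positivity), mul_comm] at hθα

end Recurrence

theorem Tseq_pos_general (p : ℕ) (hp : 2 ≤ p) (τ δ : ℝ)
    (hδ0 : 0 < δ) (hδ1 : δ < 1)
    (hge : 2 * Real.sqrt δ * Real.cos (2 * Real.pi / p) ≤ τ) :
    ∃ t : ℝ, Tseq τ δ p = (t : ℂ) ∧ 0 < t := by
  refine ⟨_, Tseq_eq_sum_range τ δ p, ?_⟩
  have hδ : δ = √δ ^ 2 := (sq_sqrt hδ0.le).symm
  refine sum_range_succ_pos_of_two_mul_cos_le (s := fun n => (Sseq τ δ n).re) (sqrt_pos.2 hδ0)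
    ((sqrt_lt' one_pos).2 (by simpa)) hp hge (by simp [Sseq]) (by simp [Sseq]) fun n => ?_
  rw [← hδ]
  exact Sseq_re_add_two τ δ n

/-- Let p ≥ 2 and (τ,δ) ∈ 𝒯 with τ ≥ g_{p/2}(δ) = 2√δ cos(2π/p).
Then T_p is a real number and T_p > 0. -/
theorem Tseq_pos (p : ℕ) (hp : 2 ≤ p) (τ δ : ℝ)
    (hδ0 : 0 < δ) (hδ1 : δ < 1) (hτT : |τ| < δ + 1)
    (hge : 2 * Real.sqrt δ * Real.cos (2 * Real.pi / p) ≤ τ) :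
    ∃ t : ℝ, Tseq τ δ p = (t : ℂ) ∧ 0 < t :=
  Tseq_pos_general p hp τ δ hδ0 hδ1 hge
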